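/- Let (A_n)_{n≥1} be a strictly stationary ergodic process of nonnegative column-allowable p×p matrices with E[max(log‖A₁‖,0)] < ∞, which is weakly sequentially primitive; assume the first two Lyapunov exponents λ₁, λ₂ exist as almost-sure limits of (1/n)log σ¹_n and (1/n)log σ²_n with λ₁ − λ₂ > 0, and assume the weak subexponentiality condition on ratios of entries of M_n. Fix a measurable choice of singular value decompositions M_n = U_n Σ_n V_n in which the first row v_n¹ of V_n is chosen with nonnegative entries whenever possible. Then almost surely the limit v¹ = lim_{n→∞} v_n¹ exists and every coordinate of v¹ is strictly positive: v^{1i} > 0 for all i = 1,…,p. -/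
import Mathlib


open MeasureTheory Filter Matrix
open scoped ENNReal

/-- `elog x` is the extended-real logarithm of a nonnegative real number,
with `elog x = -∞` for `x ≤ 0`. -/
noncomputable def elog (x : ℝ) : EReal := if x ≤ 0 then ⊥ else ((Real.log x : ℝ) : EReal)

/-- `Mprod A n = A (n-1) * ⋯ * A 0`, i.e. the product `M_n = A_n A_{n-1} ⋯ A_1`
of the first `n` matrices of the (0-indexed) sequence `A`. -/
def Mprod {p : ℕ} (A : ℕ → Matrix (Fin p) (Fin p) ℝ) : ℕ → Matrix (Fin p) (Fin p) ℝ
  | 0 => 1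
  | n + 1 => A n * Mprod A n

/-- Every row of `M` is either strictly positive or identically zero. -/
def RowsPosOrZero {p : ℕ} (M : Matrix (Fin p) (Fin p) ℝ) : Prop :=
  ∀ i, (∀ j, 0 < M i j) ∨ (∀ j, M i j = 0)

/-- `A` is nonnegative and column-allowable: each column contains a strictly positive entry. -/
def ColAllowable {p : ℕ} (A : Matrix (Fin p) (Fin p) ℝ) : Prop :=
  (∀ i j, 0 ≤ A i j) ∧ ∀ j, ∃ i, 0 < A i j

/-- `M = U * S * V` is a singular value decomposition: `U, V` orthogonal and `S` diagonal
with nonnegative nonincreasing diagonal entries. -/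
def IsSVD {p : ℕ} (M U S V : Matrix (Fin p) (Fin p) ℝ) : Prop :=
  Uᵀ * U = 1 ∧ U * Uᵀ = 1 ∧ Vᵀ * V = 1 ∧ V * Vᵀ = 1 ∧
  (∀ i j, i ≠ j → S i j = 0) ∧ (∀ i, 0 ≤ S i i) ∧
  (∀ i j : Fin p, i ≤ j → S j j ≤ S i i) ∧ M = U * S * V

/-- A norm on matrices (all norms on a finite-dimensional space are equivalent). -/
noncomputable def matNorm {p : ℕ} (M : Matrix (Fin p) (Fin p) ℝ) : ℝ := ∑ i, ∑ j, |M i j|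

/-- Total variation norm of a vector: `‖v‖_TV = (1/2) ∑ i |v i|`. -/
noncomputable def tvNorm {p : ℕ} (v : Fin p → ℝ) : ℝ := (1 / 2) * ∑ i, |v i|

namespace S6aux

variable {p : ℕ}

lemma mprod_succ (A : ℕ → Matrix (Fin p) (Fin p) ℝ) (n : ℕ) :
    Mprod A (n+1) = A n * Mprod A n := rfl

lemma mprod_nonneg {A : ℕ → Matrix (Fin p) (Fin p) ℝ}
    (hA : ∀ n i j, 0 ≤ A n i j) : ∀ n i j, 0 ≤ Mprod A n i j := by
  intro n
  induction n with
  | zero =>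
    intro i j
    show (0:ℝ) ≤ (1 : Matrix (Fin p) (Fin p) ℝ) i j
    rw [Matrix.one_apply]
    split <;> norm_num
  | succ n ih =>
    intro i j
    rw [mprod_succ, Matrix.mul_apply]
    exact Finset.sum_nonneg fun l _ => mul_nonneg (hA n i l) (ih l j)

lemma mprod_col {A : ℕ → Matrix (Fin p) (Fin p) ℝ} (hA : ∀ n, ColAllowable (A n)) :
    ∀ n k, ∃ i, 0 < Mprod A n i k := by
  intro n
  induction n with
  | zero =>
    intro k
    refine ⟨k, ?_⟩
    show (0:ℝ) < (1 : Matrix (Fin p) (Fin p) ℝ) k k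
    simp [Matrix.one_apply]
  | succ n ih =>
    intro k
    obtain ⟨j, hj⟩ := ih k
    obtain ⟨i, hi⟩ := (hA n).2 j
    refine ⟨i, ?_⟩
    rw [mprod_succ, Matrix.mul_apply]
    have h1 : ∀ l ∈ Finset.univ, 0 ≤ A n i l * Mprod A n l k :=
      fun l _ => mul_nonneg ((hA n).1 i l) (mprod_nonneg (fun n => (hA n).1) n l k)
    have h2 : 0 < A n i j * Mprod A n j k := mul_pos hi hj
    calc (0:ℝ) < A n i j * Mprod A n j k := h2
    _ ≤ ∑ l, A n i l * Mprod A n l k :=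
      Finset.single_le_sum h1 (Finset.mem_univ j)

lemma rows_mono {A : ℕ → Matrix (Fin p) (Fin p) ℝ} (hA : ∀ n, ColAllowable (A n)) {τ : ℕ}
    (h : RowsPosOrZero (Mprod A τ)) : ∀ n, τ ≤ n → RowsPosOrZero (Mprod A n) := by
  intro n hn
  induction n, hn using Nat.le_induction with
  | base => exact h
  | succ n hn ih =>
    intro i
    by_cases hex : ∃ j, 0 < A n i j ∧ ∀ k, 0 < Mprod A n j k
    · left
      intro k
      obtain ⟨j, hj1, hj2⟩ := hex
      rw [mprod_succ, Matrix.mul_apply]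
      have h1 : ∀ l ∈ Finset.univ, 0 ≤ A n i l * Mprod A n l k :=
        fun l _ => mul_nonneg ((hA n).1 i l) (mprod_nonneg (fun n => (hA n).1) n l k)
      calc (0:ℝ) < A n i j * Mprod A n j k := mul_pos hj1 (hj2 k)
      _ ≤ ∑ l, A n i l * Mprod A n l k := Finset.single_le_sum h1 (Finset.mem_univ j)
    · right
      intro k
      rw [mprod_succ, Matrix.mul_apply]
      refine Finset.sum_eq_zero fun l _ => ?_
      by_cases hl : 0 < A n i l
      · have : ¬ (∀ k, 0 < Mprod A n l k) := fun hc => hex ⟨l, hl, hc⟩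
        rcases ih l with hpos | hzero
        · exact absurd hpos this
        · rw [hzero k, mul_zero]
      · have : A n i l = 0 := le_antisymm (not_lt.1 hl) ((hA n).1 i l)
        rw [this, zero_mul]

lemma exists_B {A : ℕ → Matrix (Fin p) (Fin p) ℝ} (hA : ∀ n i j, 0 ≤ A n i j) (n : ℕ) :
    ∀ m, n ≤ m → ∃ B : Matrix (Fin p) (Fin p) ℝ,
      (∀ i j, 0 ≤ B i j) ∧ Mprod A m = B * Mprod A n := by
  intro m hm
  induction m, hm using Nat.le_induction with
  | base => exact ⟨1, fun i j => by rw [Matrix.one_apply]; split <;> norm_num, (one_mul _).symm⟩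
  | succ m hm ih =>
    obtain ⟨B, hB0, hBM⟩ := ih
    refine ⟨A m * B, fun i j => ?_, ?_⟩
    · rw [Matrix.mul_apply]
      exact Finset.sum_nonneg fun l _ => mul_nonneg (hA m i l) (hB0 l j)
    · rw [mprod_succ, hBM, Matrix.mul_assoc]

lemma exists_delta0 {T : Matrix (Fin p) (Fin p) ℝ} (hT0 : ∀ i j, 0 ≤ T i j)
    (hτ : RowsPosOrZero T) (hne : ∃ l k, 0 < T l k) :
    ∃ δ : ℝ, 0 < δ ∧ δ ≤ 1 ∧ ∀ l k k', δ * T l k' ≤ T l k := by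
  classical
  obtain ⟨l₀, k₀, hlk⟩ := hne
  set Sf : Finset (Fin p × Fin p) := Finset.univ.filter (fun x => 0 < T x.1 x.2) with hSf
  have hSne : Sf.Nonempty := ⟨(l₀, k₀), by simp [hSf, hlk]⟩
  have hUne : (Finset.univ : Finset (Fin p × Fin p)).Nonempty := ⟨(l₀, k₀), Finset.mem_univ _⟩
  set mn : ℝ := Sf.inf' hSne (fun x => T x.1 x.2) with hmn
  set mx : ℝ := Finset.univ.sup' hUne (fun x : Fin p × Fin p => T x.1 x.2) with hmx
  have hmn0 : 0 < mn := by
    rw [hmn, Finset.lt_inf'_iff]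
    intro x hx
    exact (Finset.mem_filter.1 hx).2
  have hle : ∀ l k, T l k ≤ mx := fun l k =>
    Finset.le_sup' (f := fun x : Fin p × Fin p => T x.1 x.2) (Finset.mem_univ (l, k))
  have hmnmx : mn ≤ mx := by
    obtain ⟨x, hx⟩ := hSne
    exact le_trans (Finset.inf'_le (fun x : Fin p × Fin p => T x.1 x.2) hx) (hle x.1 x.2)
  have hmx0 : 0 < mx + 1 := by linarith
  refine ⟨mn / (mx + 1), by positivity, ?_, ?_⟩
  · rw [div_le_one (by linarith)]
    linarith
  · intro l k k'
    rcases hτ l with hpos | hzero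
    · have h1 : mn ≤ T l k := Finset.inf'_le (fun x : Fin p × Fin p => T x.1 x.2) (show ((l,k) : Fin p × Fin p) ∈ Sf by simp [hSf, hpos k])
      have h2 : T l k' ≤ mx := hle l k'
      rw [div_mul_eq_mul_div, div_le_iff₀ (by linarith)]
      nlinarith [hpos k']
    · rw [hzero k, hzero k']
      simp

lemma row_sq_sum {W : Matrix (Fin p) (Fin p) ℝ} (h : W * Wᵀ = 1) (i : Fin p) :
    ∑ k, (W i k)^2 = 1 := by
  have h1 := congrFun (congrFun h i) i
  rw [Matrix.mul_apply, Matrix.one_apply_eq] at h1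
  rw [← h1]
  exact Finset.sum_congr rfl fun k _ => by rw [Matrix.transpose_apply, sq]

lemma entry_le_one {W : Matrix (Fin p) (Fin p) ℝ} (h : W * Wᵀ = 1) (i k : Fin p) :
    |W i k| ≤ 1 := by
  have h1 := row_sq_sum h i
  have h2 : (W i k)^2 ≤ 1 := by
    rw [← h1]
    exact Finset.single_le_sum (f := fun l => (W i l)^2) (fun l _ => sq_nonneg _) (Finset.mem_univ k)
  nlinarith [sq_abs (W i k), abs_nonneg (W i k)]
 
lemma delta_mono {A : ℕ → Matrix (Fin p) (Fin p) ℝ} (hA : ∀ n i j, 0 ≤ A n i j)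
    {τ : ℕ} {δ : ℝ} (hδ0 : 0 ≤ δ)
    (hbase : ∀ l k k', δ * Mprod A τ l k' ≤ Mprod A τ l k) :
    ∀ n, τ ≤ n → ∀ l k k', δ * Mprod A n l k' ≤ Mprod A n l k := by
  intro n hn
  induction n, hn using Nat.le_induction with
  | base => exact hbase
  | succ n hn ih =>
    intro l k k'
    show δ * (A n * Mprod A n) l k' ≤ (A n * Mprod A n) l k
    rw [Matrix.mul_apply, Matrix.mul_apply, Finset.mul_sum]
    refine Finset.sum_le_sum fun j _ => ?_
    calc δ * (A n l j * Mprod A n j k') = A n l j * (δ * Mprod A n j k') := by ring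
    _ ≤ A n l j * Mprod A n j k := mul_le_mul_of_nonneg_left (ih j k k') (hA n l j)

lemma svd_entry {M U S V : Matrix (Fin p) (Fin p) ℝ} (h : IsSVD M U S V) (i k : Fin p) :
    M i k = ∑ r, U i r * (S r r * V r k) := by
  obtain ⟨-, -, -, -, hdiag, -, -, hM⟩ := h
  rw [hM, Matrix.mul_apply]
  refine Finset.sum_congr rfl fun t _ => ?_
  rw [Matrix.mul_apply]
  rw [Finset.sum_eq_single t]
  · ring
  · intro r _ hrt
    simp [hdiag r t hrt]
  · intro habs
    exact absurd (Finset.mem_univ t) habs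

/-- The rank-one approximation bound: `|M i k - U i i0 * (σ1 * V i0 k)| ≤ p * σ2`. -/
lemma svd_R {M U S V : Matrix (Fin p) (Fin p) ℝ} (h : IsSVD M U S V)
    {i0 i1 : Fin p} (hi0 : (i0 : ℕ) = 0) (hi1 : (i1 : ℕ) = 1)
    (hU1 : ∀ i r, |U i r| ≤ 1) (hV1 : ∀ r k, |V r k| ≤ 1) (i k : Fin p) :
    |M i k - U i i0 * (S i0 i0 * V i0 k)| ≤ p * S i1 i1 := by
  have hit := svd_entry h i k
  have hsplit : M i k = U i i0 * (S i0 i0 * V i0 k)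
      + ∑ r ∈ Finset.univ.erase i0, U i r * (S r r * V r k) := by
    rw [hit, ← Finset.add_sum_erase _ _ (Finset.mem_univ i0)]
  rw [hsplit]
  rw [add_sub_cancel_left]
  calc |∑ r ∈ Finset.univ.erase i0, U i r * (S r r * V r k)|
      ≤ ∑ r ∈ Finset.univ.erase i0, |U i r * (S r r * V r k)| := Finset.abs_sum_le_sum_abs _ _
  _ ≤ ∑ r ∈ Finset.univ.erase i0, S i1 i1 := by
      refine Finset.sum_le_sum fun r hr => ?_
      have hr0 : r ≠ i0 := (Finset.mem_erase.1 hr).1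
      have h1r : i1 ≤ r := by
        have : 1 ≤ (r : ℕ) := by
          rcases Nat.eq_zero_or_pos (r : ℕ) with h0 | h1
          · exact absurd (Fin.ext (h0.trans hi0.symm)) hr0
          · exact h1
        exact Fin.le_def.2 (by omega)
      have hmono := h.2.2.2.2.2.2.1 i1 r h1r
      have hS0 : 0 ≤ S r r := h.2.2.2.2.2.1 r
      rw [abs_mul, abs_mul, abs_of_nonneg hS0]
      calc |U i r| * (S r r * |V r k|) ≤ 1 * (S r r * 1) := by
            apply mul_le_mul (hU1 i r) ?_ (by positivity) zero_le_one
            exact mul_le_mul_of_nonneg_left (hV1 r k) hS0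
      _ = S r r := by ring
      _ ≤ S i1 i1 := hmono
  _ ≤ p * S i1 i1 := by
      rw [Finset.sum_const, nsmul_eq_mul]
      have hS1 : 0 ≤ S i1 i1 := h.2.2.2.2.2.1 i1
      have : ((Finset.univ.erase i0).card : ℝ) ≤ p := by
        have := Finset.card_erase_le (s := (Finset.univ : Finset (Fin p))) (a := i0)
        have h2 : (Finset.univ : Finset (Fin p)).card = p := Finset.card_univ.trans (Fintype.card_fin p)
        exact_mod_cast le_trans this (le_of_eq h2)
      nlinarith

lemma flip_svd {M U S V : Matrix (Fin p) (Fin p) ℝ} (h : IsSVD M U S V)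
    {s : ℝ} (hs : s = 1 ∨ s = -1) (i0 : Fin p) :
    IsSVD M (U * Matrix.diagonal (fun r => if r = i0 then s else 1)) S
      (Matrix.diagonal (fun r => if r = i0 then s else 1) * V) := by
  set F : Matrix (Fin p) (Fin p) ℝ := Matrix.diagonal (fun r => if r = i0 then s else 1) with hF
  have hFT : Fᵀ = F := Matrix.diagonal_transpose _
  have hFF : F * F = 1 := by
    rw [hF, Matrix.diagonal_mul_diagonal]
    ext i j
    by_cases hij : i = j
    · subst hij
      by_cases hi : i = i0 <;> rcases hs with h | h <;>
        simp [Matrix.diagonal_apply, Matrix.one_apply, hi, h]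
    · simp [Matrix.diagonal_apply, Matrix.one_apply, hij]
  obtain ⟨h1, h2, h3, h4, h5, h6, h7, h8⟩ := h
  have hFSF : F * S * F = S := by
    rw [hF]
    ext i j
    rw [Matrix.mul_diagonal, Matrix.diagonal_mul]
    by_cases hij : i = j
    · subst hij
      rcases hs with h | h <;> by_cases hi : i = i0 <;> simp [hi, h] <;> ring
    · rw [h5 i j hij]
      ring
  rw [hF] at hFSF hFF
  refine ⟨?_, ?_, ?_, ?_, h5, h6, h7, ?_⟩
  · rw [Matrix.transpose_mul, Matrix.diagonal_transpose,
      Matrix.mul_assoc _ Uᵀ (U * _), ← Matrix.mul_assoc Uᵀ U _, h1, Matrix.one_mul, hFF]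
  · rw [Matrix.transpose_mul, Matrix.diagonal_transpose,
      Matrix.mul_assoc U _ _, ← Matrix.mul_assoc _ _ Uᵀ, hFF, Matrix.one_mul, h2]
  · rw [Matrix.transpose_mul, Matrix.diagonal_transpose,
      Matrix.mul_assoc Vᵀ _ _, ← Matrix.mul_assoc _ _ V, hFF, Matrix.one_mul, h3]
  · rw [Matrix.transpose_mul, Matrix.diagonal_transpose,
      Matrix.mul_assoc _ V _, ← Matrix.mul_assoc V Vᵀ _, h4, Matrix.one_mul, hFF]
  · rw [h8]
    have key : U * Matrix.diagonal (fun r => if r = i0 then s else 1) * S *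
        (Matrix.diagonal (fun r => if r = i0 then s else 1) * V)
        = U * (Matrix.diagonal (fun r => if r = i0 then s else 1) * S *
          Matrix.diagonal (fun r => if r = i0 then s else 1)) * V := by
      simp only [Matrix.mul_assoc]
    rw [key, hFSF]

lemma flip_first_row {V : Matrix (Fin p) (Fin p) ℝ} {s : ℝ} (i0 : Fin p) (k : Fin p) :
    (Matrix.diagonal (fun r => if r = i0 then s else 1) * V) i0 k = s * V i0 k := by
  rw [Matrix.diagonal_mul, if_pos rfl]

lemma ventry_le_one {p : ℕ} {x : Fin p → ℝ} (h : ∑ k, (x k)^2 = 1) (k : Fin p) : |x k| ≤ 1 := by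
  have h2 : (x k)^2 ≤ 1 := by
    rw [← h]
    exact Finset.single_le_sum (f := fun l => (x l)^2) (fun l _ => sq_nonneg _) (Finset.mem_univ k)
  nlinarith [sq_abs (x k), abs_nonneg (x k)]

lemma exists_big {p : ℕ} (hp : 0 < p) {x : Fin p → ℝ} (h : ∑ k, (x k)^2 = 1) :
    ∃ k, 1/(p:ℝ) ≤ |x k| := by
  have hq : (0:ℝ) < p := by exact_mod_cast hp
  have hq1 : 1/(p:ℝ) ≤ 1 := by
    rw [div_le_one hq]
    exact_mod_cast hp
  by_contra hc
  push_neg at hc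
  have hlt : ∀ k, (x k)^2 < 1/(p:ℝ) := by
    intro k
    have h1 := hc k
    have h2 := abs_nonneg (x k)
    nlinarith [sq_abs (x k), mul_self_lt_mul_self h2 h1]
  have hne : (Finset.univ : Finset (Fin p)).Nonempty := by
    rw [Finset.univ_nonempty_iff]
    exact Fin.pos_iff_nonempty.1 hp
  have hsum : ∑ k, (x k)^2 < ∑ _k : Fin p, 1/(p:ℝ) :=
    Finset.sum_lt_sum_of_nonempty hne (fun k _ => hlt k)
  rw [Finset.sum_const, Finset.card_univ, Fintype.card_fin, nsmul_eq_mul] at hsum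
  rw [h] at hsum
  rw [mul_one_div, div_self (ne_of_gt hq)] at hsum
  exact lt_irrefl _ hsum

set_option maxHeartbeats 1000000 in
lemma vec_est {p : ℕ} (hp : 2 ≤ p) {x y : Fin p → ℝ} {cs ρ η : ℝ}
    (hc : 0 < cs) (hρ0 : 0 ≤ ρ) (hρ : ρ ≤ 1/(4*(p:ℝ))) (hη0 : 0 ≤ η) (hη : η ≤ 1)
    (hx2 : ∑ k, (x k)^2 = 1) (hy2 : ∑ k, (y k)^2 = 1)
    (hkb : ∃ k, 1/(p:ℝ) ≤ y k)
    (happ : ∀ k, |x k - cs * y k| ≤ cs * ρ + η) :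
    ∀ k, |x k - y k| ≤ 15*(p:ℝ)^3*ρ + 5*(p:ℝ)^2*η := by
  have hq : (2:ℝ) ≤ (p:ℝ) := by exact_mod_cast hp
  set q : ℝ := (p:ℝ) with hqdef
  have hq0 : (0:ℝ) < q := by linarith
  have hxb : ∀ k, |x k| ≤ 1 := ventry_le_one hx2
  have hyb : ∀ k, |y k| ≤ 1 := ventry_le_one hy2
  obtain ⟨kb, hkb⟩ := hkb
  have hkb' : 1 ≤ q * y kb := by
    rw [div_le_iff₀ hq0] at hkb
    linarith
  have hρq : ρ * (4*q) ≤ 1 := by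
    rw [← le_div_iff₀ (by positivity)]
    exact hρ
  have hcs3 : cs ≤ 3*q := by
    have h1 : cs * y kb - x kb ≤ cs * ρ + η := by
      have := abs_le.1 (happ kb)
      linarith [this.1]
    have h2 : x kb ≤ 1 := (abs_le.1 (hxb kb)).2
    have hA : cs * 1 ≤ cs * (q * y kb) := mul_le_mul_of_nonneg_left hkb' hc.le
    have hC : q * (cs * y kb) ≤ q * (x kb + (cs * ρ + η)) :=
      mul_le_mul_of_nonneg_left (by linarith) hq0.le
    have hE : cs * (ρ * (4*q)) ≤ cs * 1 := mul_le_mul_of_nonneg_left hρq hc.le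
    nlinarith [hA, hC, hE, hη, hq0, hc]
  set e0 : ℝ := cs * ρ + η with he0def
  have he0 : 0 ≤ e0 := by positivity
  have hsq : |1 - cs^2| ≤ 4*q^2*e0 := by
    have h1 : (1:ℝ) - cs^2 = ∑ k, ((x k)^2 - (cs * y k)^2) := by
      rw [Finset.sum_sub_distrib, hx2]
      have h2 : ∑ k, (cs * y k)^2 = cs^2 * ∑ k, (y k)^2 := by
        rw [Finset.mul_sum]
        exact Finset.sum_congr rfl fun k _ => by ring
      rw [h2, hy2, mul_one]
    have h2 : ∀ k, |(x k)^2 - (cs * y k)^2| ≤ e0 * (1 + 3*q) := by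
      intro k
      have e1 : (x k)^2 - (cs * y k)^2 = (x k - cs * y k) * (x k + cs * y k) := by ring
      rw [e1, abs_mul]
      have e2 : |x k + cs * y k| ≤ 1 + 3*q := by
        calc |x k + cs * y k| ≤ |x k| + |cs * y k| := abs_add_le _ _
        _ ≤ 1 + 3*q := by
            rw [abs_mul, abs_of_pos hc]
            have := hyb k
            nlinarith [hxb k, abs_nonneg (y k)]
      exact mul_le_mul (happ k) e2 (abs_nonneg _) he0
    calc |1 - cs^2| = |∑ k, ((x k)^2 - (cs * y k)^2)| := by rw [h1]
    _ ≤ ∑ k, |(x k)^2 - (cs * y k)^2| := Finset.abs_sum_le_sum_abs _ _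
    _ ≤ ∑ _k : Fin p, e0 * (1 + 3*q) := Finset.sum_le_sum fun k _ => h2 k
    _ = q * (e0 * (1 + 3*q)) := by
        rw [Finset.sum_const, Finset.card_univ, Fintype.card_fin, nsmul_eq_mul]
    _ ≤ 4*q^2*e0 := by nlinarith [mul_nonneg (show (0:ℝ) ≤ q - 1 by linarith) he0, he0, hq, hq0]
  have hcs1 : |cs - 1| ≤ 4*q^2*e0 := by
    have h2 : |cs - 1| * (cs + 1) = |1 - cs^2| := by
      rw [show |1 - cs^2| = |(cs-1)*(cs+1)| by
        rw [show (cs-1)*(cs+1) = -(1-cs^2) by ring, abs_neg]]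
      rw [abs_mul, abs_of_pos (show (0:ℝ) < cs + 1 by linarith)]
    have h3 : |cs - 1| ≤ |cs - 1| * (cs + 1) :=
      le_mul_of_one_le_right (abs_nonneg _) (by linarith)
    rw [h2] at h3
    linarith
  intro k
  calc |x k - y k| = |(x k - cs * y k) + (cs - 1) * y k| := by rw [show x k - y k = (x k - cs * y k) + (cs - 1) * y k by ring]
  _ ≤ |x k - cs * y k| + |(cs - 1) * y k| := abs_add_le _ _
  _ ≤ e0 + 4*q^2*e0 * 1 := by
      rw [abs_mul]
      have := mul_le_mul hcs1 (hyb k) (abs_nonneg _) (by positivity)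
      linarith [happ k]
  _ ≤ 15*q^3*ρ + 5*q^2*η := by
      have j1 : cs * ρ ≤ 3*q*ρ := mul_le_mul_of_nonneg_right hcs3 hρ0
      have j2 : 4*q^2*(cs*ρ) ≤ 4*q^2*(3*q*ρ) :=
        mul_le_mul_of_nonneg_left j1 (by positivity)
      have j3 : (0:ℝ) ≤ (q^2 - 1) * η := mul_nonneg (by nlinarith) hη0
      have j4 : (0:ℝ) ≤ (q^3 - q) * ρ := mul_nonneg (by nlinarith) hρ0
      have he0' : e0 = cs * ρ + η := he0def
      nlinarith [j1, j2, j3, j4]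
set_option maxHeartbeats 4000000 in
lemma key {p : ℕ} (hp : 2 ≤ p)
    {A : ℕ → Matrix (Fin p) (Fin p) ℝ} (hallow : ∀ n, ColAllowable (A n))
    {τ : ℕ} (hprim : RowsPosOrZero (Mprod A τ))
    {U S V : ℕ → Matrix (Fin p) (Fin p) ℝ}
    (hSVD : ∀ n, IsSVD (Mprod A n) (U n) (S n) (V n))
    {i0 i1 : Fin p} (hi0 : (i0:ℕ) = 0) (hi1 : (i1:ℕ) = 1)
    (hVch : ∀ n, (∃ U' S' V', IsSVD (Mprod A n) U' S' V' ∧ ∀ j, 0 ≤ V' i0 j) →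
      ∀ j, 0 ≤ V n i0 j)
    {δ : ℝ} (hδ0 : 0 < δ) (hδ1 : δ ≤ 1)
    (hδ : ∀ n, τ ≤ n → ∀ l k k', δ * Mprod A n l k' ≤ Mprod A n l k)
    (n : ℕ) (hτn : τ ≤ n)
    (hσ1 : 0 < S n i0 i0)
    {θ : ℝ} (hθ0 : 0 ≤ θ) (hθs : 16*(p:ℝ)^4*θ ≤ δ)
    (hσ2 : S n i1 i1 ≤ θ * S n i0 i0) :
    ∃ istar kbar : Fin p,
      1 ≤ (p:ℝ) * U n istar i0 ∧
      (∀ k, 0 < Mprod A n istar k) ∧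
      S n i0 i0 ≤ 2*(p:ℝ)^2 * Mprod A n istar kbar ∧
      1 ≤ (p:ℝ) * V n i0 kbar ∧
      (∀ k, δ ≤ 4*(p:ℝ)^2 * V n i0 k) := by
  have hq : (2:ℝ) ≤ (p:ℝ) := by exact_mod_cast hp
  set q : ℝ := (p:ℝ) with hqdef
  have hq0 : (0:ℝ) < q := by linarith
  have hA0 : ∀ n i j, 0 ≤ A n i j := fun n => (hallow n).1
  have hM0 : ∀ i j, 0 ≤ Mprod A n i j := mprod_nonneg hA0 n
  obtain ⟨h1, h2, h3, h4, h5, h6, h7, h8⟩ := hSVD n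
  have hU1 : ∀ i r, |U n i r| ≤ 1 := by
    intro i r
    have hUT : (U n)ᵀ * ((U n)ᵀ)ᵀ = 1 := by rw [Matrix.transpose_transpose]; exact h1
    have := entry_le_one hUT r i
    rwa [Matrix.transpose_apply] at this
  have hV1 : ∀ r k, |V n r k| ≤ 1 := entry_le_one h4
  have hR : ∀ i k, |Mprod A n i k - U n i i0 * (S n i0 i0 * V n i0 k)| ≤ q * (θ * S n i0 i0) := by
    intro i k
    have := svd_R (hSVD n) hi0 hi1 hU1 hV1 i k
    have h2' : q * S n i1 i1 ≤ q * (θ * S n i0 i0) := mul_le_mul_of_nonneg_left hσ2 hq0.le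
    calc |Mprod A n i k - U n i i0 * (S n i0 i0 * V n i0 k)| ≤ q * S n i1 i1 := this
    _ ≤ q * (θ * S n i0 i0) := h2'
  -- big coordinates
  have hbv : ∃ kb, 1/q ≤ |V n i0 kb| := exists_big (by omega) (row_sq_sum h4 i0)
  have hbu : ∃ ib, 1/q ≤ |U n ib i0| := by
    have hUT : (U n)ᵀ * ((U n)ᵀ)ᵀ = 1 := by rw [Matrix.transpose_transpose]; exact h1
    have hsum := row_sq_sum hUT i0
    have hsum' : ∑ k, (U n k i0)^2 = 1 := by
      rw [← hsum]
      exact Finset.sum_congr rfl fun k _ => by rw [Matrix.transpose_apply]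
    exact exists_big (by omega) hsum'
  obtain ⟨kbar, hkb⟩ := hbv
  obtain ⟨istar, hib⟩ := hbu
  set a : ℝ := U n istar i0 with ha
  set b : ℝ := V n i0 kbar with hb
  set σ1 : ℝ := S n i0 i0 with hσ1d
  have hqa : 1 ≤ q * |a| := by rw [div_le_iff₀ hq0] at hib; linarith
  have hqb : 1 ≤ q * |b| := by rw [div_le_iff₀ hq0] at hkb; linarith
  have hqθ : q^4 * θ ≤ 1/16 := by nlinarith
  have hq3θ : q^3 * θ * 16 ≤ 1 := by nlinarith
  -- the product a*b is positive
  have habpos : 0 < a * b := by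
    rcases lt_or_ge 0 (a*b) with h | h
    · exact h
    · exfalso
      have hRk := hR istar kbar
      have hM := hM0 istar kbar
      have hab : a * b ≤ 0 := h
      have habs : q^2 * (a*b) ≤ -1 := by
        have e1 : |a*b| = |a| * |b| := abs_mul a b
        have e2 : 1 ≤ q^2 * |a*b| := by nlinarith [abs_nonneg a, abs_nonneg b]
        have e3 : a*b = -|a*b| := by
          rw [abs_of_nonpos hab]; ring
        nlinarith [abs_nonneg (a*b)]
      have e4 : a * (σ1 * b) ≥ Mprod A n istar kbar - q * (θ * σ1) := by
        have := abs_le.1 hRk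
        linarith [this.2]
      have e5 : q^2 * (σ1 * (a * b)) ≤ -σ1 := by nlinarith
      nlinarith [hσ1, hM]
  have e4 : a * (σ1 * b) ≥ Mprod A n istar kbar - q * (θ * σ1) := by
    have := abs_le.1 (hR istar kbar)
    linarith [this.2]
  have e4' : a * (σ1 * b) ≤ Mprod A n istar kbar + q * (θ * σ1) := by
    have := abs_le.1 (hR istar kbar)
    linarith [this.1]
  -- M istar kbar ≥ σ1/(2q²), in multiplied form
  have hMk : σ1 ≤ 2*q^2 * Mprod A n istar kbar := by
    have e6 : 1 ≤ q^2 * (a*b) := by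
      have e1 : |a*b| = |a| * |b| := abs_mul a b
      have e2 : 1 ≤ q^2 * |a*b| := by nlinarith [abs_nonneg a, abs_nonneg b]
      rw [abs_of_pos habpos] at e2
      exact e2
    -- q² M ≥ q² σ1 (ab) - q³θσ1 ≥ σ1 - σ1/16 ≥ σ1/2
    nlinarith [hσ1.le, mul_le_mul_of_nonneg_left e4' (sq_nonneg q)]
  have hMkpos : 0 < Mprod A n istar kbar := by nlinarith
  have hrowpos : ∀ k, 0 < Mprod A n istar k := by
    rcases rows_mono hallow hprim n hτn istar with hpos | hzero
    · exact hpos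
    · exact absurd (hzero kbar) (ne_of_gt hMkpos)
  -- the sign
  set s : ℝ := if 0 < a then 1 else -1 with hs
  have hsor : s = 1 ∨ s = -1 := by
    rw [hs]; split <;> simp
  have hsa : 1 ≤ q * (s * a) ∧ s * a ≤ 1 := by
    have h1a := hU1 istar i0
    rw [hs]
    split <;> rename_i hcase
    · rw [abs_of_pos hcase] at hqa h1a
      constructor <;> linarith
    · push_neg at hcase
      rw [abs_of_nonpos hcase] at hqa h1a
      constructor <;> [linarith; linarith]
  -- positivity of s * v k for every k
  have hsv : ∀ k, δ ≤ 4*q^2 * (s * V n i0 k) := by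
    intro k
    set v : ℝ := V n i0 k with hv
    have hRk := abs_le.1 (hR istar k)
    have hδk := hδ n hτn istar k kbar
    -- 2q² M_{i* k} ≥ δ σ1
    have e7 : δ * σ1 ≤ 2*q^2 * Mprod A n istar k := by
      have := mul_le_mul_of_nonneg_left hMk hδ0.le
      have h2q : 2*q^2*(δ * Mprod A n istar kbar) ≤ 2*q^2*Mprod A n istar k :=
        mul_le_mul_of_nonneg_left hδk (by positivity)
      nlinarith
    -- a σ1 v ≥ M - qθσ1, multiplied by 2q²
    have e8 : 2*q^2 * (a * (σ1 * v)) ≥ δ*σ1 - 2*q^3*θ*σ1 := by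
      nlinarith [hRk.2]
    have e9 : 4*q^2 * (σ1 * (a * v)) ≥ δ*σ1 := by
      -- 2q³θ ≤ δ/8 : from 16 q³ θ ≤ 1 and δ ≤ 1... need 2q³θ ≤ δσ1 coefficient...
      -- 2q^3θ*σ1 ≤ (δ/8)*σ1 requires 16 q^3 θ ≤ δ. We have 16 q^4 θ ≤ δ and q ≥ 1.
      have h16 : 16*q^3*θ ≤ δ := by nlinarith
      nlinarith [hσ1.le]
    have hss : s * s = 1 := by rcases hsor with h | h <;> rw [h] <;> norm_num
    have e10 : 4*q^2 * (σ1 * ((s*a) * (s*v))) ≥ δ*σ1 := by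
      have : (s*a) * (s*v) = (s*s) * (a*v) := by ring
      rw [this, hss, one_mul]
      exact e9
    have hsa1 := hsa.1
    have hsa2 := hsa.2
    have hsapos : 0 < s * a := by nlinarith
    have hδσ : 0 < δ * σ1 := mul_pos hδ0 hσ1
    have g1 : 0 < σ1 * ((s*a)*(s*v)) := by nlinarith [sq_nonneg q]
    have g2 : 0 < (s*a)*(s*v) := by
      rcases mul_pos_iff.1 g1 with ⟨_, h⟩ | ⟨h', _⟩
      · exact h
      · linarith
    have hsvpos : 0 < s * v := by
      rcases mul_pos_iff.1 g2 with ⟨_, h⟩ | ⟨h', _⟩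
      · exact h
      · linarith
    have f1 : (s*a)*(s*v) ≤ s*v := by nlinarith
    have f2 : σ1*((s*a)*(s*v)) ≤ σ1*(s*v) := mul_le_mul_of_nonneg_left f1 hσ1.le
    have f3 : 4*q^2*(σ1*((s*a)*(s*v))) ≤ 4*q^2*(σ1*(s*v)) :=
      mul_le_mul_of_nonneg_left f2 (by positivity)
    have e11 : δ*σ1 ≤ 4*q^2*(σ1*(s*v)) := by linarith only [e10, f3]
    have e12 : σ1 * δ ≤ σ1 * (4*q^2*(s*v)) := by linear_combination e11
    exact le_of_mul_le_mul_left e12 hσ1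
  -- apply the choice hypothesis
  have hnn : ∀ j, 0 ≤ V n i0 j := by
    apply hVch n
    refine ⟨U n * Matrix.diagonal (fun r => if r = i0 then s else 1), S n,
      Matrix.diagonal (fun r => if r = i0 then s else 1) * V n,
      flip_svd (hSVD n) hsor i0, fun j => ?_⟩
    rw [flip_first_row]
    have := hsv j
    nlinarith
  have hs1 : s = 1 := by
    rcases hsor with h | h
    · exact h
    · exfalso
      have := hsv kbar
      rw [h] at this
      have h2 := hnn kbar
      nlinarith
  rw [hs1] at hsa hsv
  simp only [one_mul] at hsa hsv
  refine ⟨istar, kbar, hsa.1, hrowpos, hMk, ?_, hsv⟩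
  have hb0 : 0 ≤ b := hnn kbar
  rw [abs_of_nonneg hb0] at hqb
  exact hqb
lemma svd_R' {p : ℕ} {M U S V : Matrix (Fin p) (Fin p) ℝ} (h : IsSVD M U S V)
    {i0 i1 : Fin p} (hi0 : (i0 : ℕ) = 0) (hi1 : (i1 : ℕ) = 1) (i k : Fin p) :
    |M i k - U i i0 * (S i0 i0 * V i0 k)| ≤ p * S i1 i1 := by
  have hU1 : ∀ i r, |U i r| ≤ 1 := by
    intro i r
    have hUT : Uᵀ * (Uᵀ)ᵀ = 1 := by rw [Matrix.transpose_transpose]; exact h.1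
    have := entry_le_one hUT r i
    rwa [Matrix.transpose_apply] at this
  exact svd_R h hi0 hi1 hU1 (entry_le_one h.2.2.2.1) i k

set_option maxHeartbeats 2000000 in
lemma est {p : ℕ} (hp : 2 ≤ p)
    {A : ℕ → Matrix (Fin p) (Fin p) ℝ} (hallow : ∀ n, ColAllowable (A n))
    {τ : ℕ} (hprim : RowsPosOrZero (Mprod A τ))
    {U S V : ℕ → Matrix (Fin p) (Fin p) ℝ}
    (hSVD : ∀ n, IsSVD (Mprod A n) (U n) (S n) (V n))
    {i0 i1 : Fin p} (hi0 : (i0:ℕ) = 0) (hi1 : (i1:ℕ) = 1)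
    (hVch : ∀ n, (∃ U' S' V', IsSVD (Mprod A n) U' S' V' ∧ ∀ j, 0 ≤ V' i0 j) →
      ∀ j, 0 ≤ V n i0 j)
    {δ : ℝ} (hδ0 : 0 < δ) (hδ1 : δ ≤ 1)
    (hδ : ∀ n, τ ≤ n → ∀ l k k', δ * Mprod A n l k' ≤ Mprod A n l k)
    {γ : ℝ} (hγ : 0 < γ)
    (n m : ℕ) (hτn : τ ≤ n) (hnm : n ≤ m)
    (hσ1n : 0 < S n i0 i0) (hσ1m : 0 < S m i0 i0)
    (hσ2n : S n i1 i1 ≤ Real.exp (-(2*γ) * n) * S n i0 i0)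
    (hσ2m : S m i1 i1 ≤ Real.exp (-(2*γ) * m) * S m i0 i0)
    (hsmall : Real.exp (-(γ/2) * n) * (16*(p:ℝ)^4) ≤ δ)
    (hsub : ∀ i j k, Mprod A n j k = 0 ∨ Mprod A n i k ≤ Real.exp (γ/2 * n) * Mprod A n j k) :
    ∀ k, |V m i0 k - V n i0 k| ≤ 65*(p:ℝ)^6 * Real.exp (-(γ/2) * n) := by
  classical
  have hq : (2:ℝ) ≤ (p:ℝ) := by exact_mod_cast hp
  set q : ℝ := (p:ℝ) with hqdef
  have hq0 : (0:ℝ) < q := by linarith only [hq]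
  have hA0 : ∀ n i j, 0 ≤ A n i j := fun n => (hallow n).1
  have hτm : τ ≤ m := hτn.trans hnm
  have hnm' : (n:ℝ) ≤ (m:ℝ) := by exact_mod_cast hnm
  have hn0 : (0:ℝ) ≤ (n:ℝ) := Nat.cast_nonneg n
  set ee : ℝ := Real.exp (-(γ/2) * n) with heedef
  set En : ℝ := Real.exp (γ/2 * n) with hEndef
  set θn : ℝ := Real.exp (-(2*γ) * n) with hθndef
  set θm : ℝ := Real.exp (-(2*γ) * m) with hθmdef
  have hee0 : 0 < ee := Real.exp_pos _
  have hEn0 : 0 < En := Real.exp_pos _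
  have hθn0 : 0 < θn := Real.exp_pos _
  have hθm0 : 0 < θm := Real.exp_pos _
  have hγn : 0 ≤ γ * n := mul_nonneg hγ.le hn0
  have hγnm : γ * n ≤ γ * m := mul_le_mul_of_nonneg_left hnm' hγ.le
  have hθn_ee : θn ≤ ee := Real.exp_le_exp.2 (by nlinarith only [hγn])
  have hθm_ee : θm ≤ ee := Real.exp_le_exp.2 (by nlinarith only [hγn, hγnm])
  have hEθ : En * θn ≤ ee := by
    rw [hEndef, hθndef, ← Real.exp_add]
    exact Real.exp_le_exp.2 (by nlinarith only [hγn])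
  have heesmall : ee * (16*q^4) ≤ δ := hsmall
  have hq4 : (0:ℝ) ≤ 16*q^4 := by positivity
  have hθsn : 16*q^4*θn ≤ δ := by
    have h := mul_le_mul_of_nonneg_left hθn_ee hq4
    linarith only [h, heesmall]
  have hθsm : 16*q^4*θm ≤ δ := by
    have h := mul_le_mul_of_nonneg_left hθm_ee hq4
    linarith only [h, heesmall]
  obtain ⟨is, kb, hun, hrowposn, hMkn, hvkn, hvn⟩ :=
    key hp hallow hprim hSVD hi0 hi1 hVch hδ0 hδ1 hδ n hτn hσ1n hθn0.le hθsn hσ2n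
  obtain ⟨im, kbm, hum, hrowposm, hMkm, hvkm, hvm⟩ :=
    key hp hallow hprim hSVD hi0 hi1 hVch hδ0 hδ1 hδ m hτm hσ1m hθm0.le hθsm hσ2m
  obtain ⟨B, hB0, hBM⟩ := exists_B hA0 n m hnm
  set w : Fin p → ℝ := fun l => B im l with hwdef
  have hw0 : ∀ l, 0 ≤ w l := fun l => hB0 im l
  set Pos : Finset (Fin p) := Finset.univ.filter (fun l => ∀ k, 0 < Mprod A n l k) with hPosdef
  set σ1 : ℝ := S n i0 i0 with hσ1def
  set σ1m' : ℝ := S m i0 i0 with hσ1mdef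
  have hsplit : ∀ k, Mprod A m im k = ∑ l ∈ Pos, w l * Mprod A n l k := by
    intro k
    rw [hBM, Matrix.mul_apply]
    rw [← Finset.sum_filter_add_sum_filter_not Finset.univ
      (fun l => ∀ k, 0 < Mprod A n l k) (fun l => B im l * Mprod A n l k)]
    have hz : ∑ l ∈ Finset.univ.filter (fun l => ¬ ∀ k, 0 < Mprod A n l k),
        B im l * Mprod A n l k = 0 := by
      refine Finset.sum_eq_zero fun l hl => ?_
      have hnl := (Finset.mem_filter.1 hl).2
      rcases rows_mono hallow hprim n hτn l with hpos | hzero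
      · exact absurd hpos hnl
      · rw [hzero k, mul_zero]
    rw [hz, add_zero]
  set C : ℝ := ∑ l ∈ Pos, w l with hCdef
  have hC0 : 0 ≤ C := Finset.sum_nonneg fun l _ => hw0 l
  have hCpos : 0 < C := by
    rcases hC0.lt_or_eq with h | h
    · exact h
    · exfalso
      have hall : ∀ l ∈ Pos, w l = 0 :=
        (Finset.sum_eq_zero_iff_of_nonneg (fun l _ => hw0 l)).1 h.symm
      have : Mprod A m im kbm = 0 := by
        rw [hsplit kbm]
        exact Finset.sum_eq_zero fun l hl => by rw [hall l hl, zero_mul]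
      exact absurd this (ne_of_gt (hrowposm kbm))
  set D : ℝ := ∑ l ∈ Pos, w l * U n l i0 with hDdef
  have hEdef : ∀ k, Mprod A m im k - σ1 * D * V n i0 k
      = ∑ l ∈ Pos, w l * (Mprod A n l k - U n l i0 * (σ1 * V n i0 k)) := by
    intro k
    have h1 : σ1 * D * V n i0 k = ∑ l ∈ Pos, w l * (U n l i0 * (σ1 * V n i0 k)) := by
      rw [hDdef, Finset.mul_sum, Finset.sum_mul]
      exact Finset.sum_congr rfl fun l _ => by ring
    rw [hsplit k, h1, ← Finset.sum_sub_distrib]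
    exact Finset.sum_congr rfl fun l _ => by ring
  have hEbound : ∀ k, |Mprod A m im k - σ1 * D * V n i0 k| ≤ C * (q * (θn * σ1)) := by
    intro k
    rw [hEdef k]
    calc |∑ l ∈ Pos, w l * (Mprod A n l k - U n l i0 * (σ1 * V n i0 k))|
        ≤ ∑ l ∈ Pos, |w l * (Mprod A n l k - U n l i0 * (σ1 * V n i0 k))| :=
          Finset.abs_sum_le_sum_abs _ _
    _ ≤ ∑ l ∈ Pos, w l * (q * (θn * σ1)) := by
        refine Finset.sum_le_sum fun l _ => ?_
        rw [abs_mul, abs_of_nonneg (hw0 l)]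
        refine mul_le_mul_of_nonneg_left ?_ (hw0 l)
        calc |Mprod A n l k - U n l i0 * (σ1 * V n i0 k)| ≤ q * S n i1 i1 :=
              svd_R' (hSVD n) hi0 hi1 l k
        _ ≤ q * (θn * σ1) := mul_le_mul_of_nonneg_left hσ2n hq0.le
    _ = C * (q * (θn * σ1)) := by rw [hCdef, ← Finset.sum_mul]
  have hlowb : C * Mprod A n is kb ≤ En * Mprod A m im kb := by
    rw [hsplit kb, hCdef, Finset.sum_mul, Finset.mul_sum]
    refine Finset.sum_le_sum fun l hl => ?_
    have hlpos : ∀ k, 0 < Mprod A n l k := (Finset.mem_filter.1 hl).2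
    rcases hsub is l kb with hzero | hle
    · exact absurd hzero (ne_of_gt (hlpos kb))
    · calc w l * Mprod A n is kb ≤ w l * (En * Mprod A n l kb) :=
          mul_le_mul_of_nonneg_left hle (hw0 l)
      _ = En * (w l * Mprod A n l kb) := by ring
  have hvkb1 : |V n i0 kb| ≤ 1 := entry_le_one (hSVD n).2.2.2.1 i0 kb
  have hvkbpos : 0 < V n i0 kb := by nlinarith only [hvkn, hq0]
  have hvkble : V n i0 kb ≤ 1 := (abs_le.1 hvkb1).2
  have hstep1 : C * σ1 ≤ 2*q^2 * (En * Mprod A m im kb) := by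
    have h1 : C * σ1 ≤ C * (2*q^2 * Mprod A n is kb) := mul_le_mul_of_nonneg_left hMkn hC0
    have h2 : 2*q^2 * (C * Mprod A n is kb) ≤ 2*q^2 * (En * Mprod A m im kb) :=
      mul_le_mul_of_nonneg_left hlowb (by positivity)
    linarith only [h1, h2]
  have hstep2 : C * σ1 ≤ 2*q^2*En*(σ1 * D * V n i0 kb) + 2*q^3*(En*θn)*(C*σ1) := by
    have hE := (abs_le.1 (hEbound kb)).2
    have h3 : Mprod A m im kb ≤ σ1 * D * V n i0 kb + C * (q * (θn * σ1)) := by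
      linarith only [hE]
    have h4 : (2*q^2*En) * Mprod A m im kb
        ≤ (2*q^2*En) * (σ1 * D * V n i0 kb + C * (q * (θn * σ1))) :=
      mul_le_mul_of_nonneg_left h3 (by positivity)
    have h5 : (2*q^2*En) * (σ1 * D * V n i0 kb + C * (q * (θn * σ1)))
        = 2*q^2*En*(σ1 * D * V n i0 kb) + 2*q^3*(En*θn)*(C*σ1) := by ring
    have h6 : 2*q^2 * (En * Mprod A m im kb) = (2*q^2*En) * Mprod A m im kb := by ring
    linarith only [hstep1, h4, h5, h6]
  have hG : 2*q^3*(En*θn) ≤ 1/16 := by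
    have f1 : (2*q^3) * (En*θn) ≤ (2*q^3) * ee :=
      mul_le_mul_of_nonneg_left hEθ (by positivity)
    have f2 : (0:ℝ) ≤ (q - 2) * (q^3 * ee) :=
      mul_nonneg (by linarith only [hq]) (mul_nonneg (by positivity) hee0.le)
    nlinarith only [f1, f2, heesmall, hδ1, hee0.le, hq0]
  have hCσpos : 0 < C * σ1 := mul_pos hCpos hσ1n
  have hstep3 : (7/8) * (C * σ1) ≤ 2*q^2*En*(σ1 * D * V n i0 kb) := by
    have f1 : (2*q^3*(En*θn)) * (C*σ1) ≤ (1/16) * (C*σ1) :=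
      mul_le_mul_of_nonneg_right hG hCσpos.le
    have f2 : 2*q^3*(En*θn)*(C*σ1) = (2*q^3*(En*θn)) * (C*σ1) := by ring
    linarith only [hstep2, f1, f2, hCσpos]
  have hDpos : 0 < D := by
    have hpos : 0 < 2*q^2*En*(σ1 * D * V n i0 kb) := by
      have : 0 < (7/8) * (C * σ1) := by linarith only [hCσpos]
      linarith only [this, hstep3]
    have e : 2*q^2*En*(σ1 * D * V n i0 kb) = (2*q^2*En*σ1*V n i0 kb)*D := by ring
    have hcpos : 0 < 2*q^2*En*σ1*V n i0 kb := by positivity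
    rw [e] at hpos
    by_contra hD
    push_neg at hD
    nlinarith only [hpos, hcpos, hD]
  have hCD : C ≤ 4*q^2*En*D := by
    have hσD : (0:ℝ) ≤ σ1 * D := (mul_pos hσ1n hDpos).le
    have h1 : (σ1*D) * V n i0 kb ≤ (σ1*D) * 1 := mul_le_mul_of_nonneg_left hvkble hσD
    have h1' : σ1 * D * V n i0 kb ≤ σ1 * D := by linarith only [h1]
    have h2 : (2*q^2*En) * (σ1 * D * V n i0 kb) ≤ (2*q^2*En) * (σ1*D) :=
      mul_le_mul_of_nonneg_left h1' (by positivity)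
    have h3 : σ1 * ((7/8) * C) ≤ σ1 * (2*q^2*En*D) := by nlinarith only [hstep3, h2]
    have h4 := le_of_mul_le_mul_left h3 hσ1n
    have h5 : (0:ℝ) ≤ q^2*En*D := by positivity
    linarith only [h4, h5]
  set am : ℝ := σ1m' * U m im i0 with hamdef
  have humpos : 0 < U m im i0 := by nlinarith only [hum, hq0]
  have ham0 : 0 < am := mul_pos hσ1m humpos
  have hσqam : σ1m' ≤ q * am := by
    have h1 : σ1m' * 1 ≤ σ1m' * (q * U m im i0) := mul_le_mul_of_nonneg_left hum hσ1m.le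
    have h2 : σ1m' * (q * U m im i0) = q * am := by rw [hamdef]; ring
    linarith only [h1, h2]
  set cs : ℝ := σ1 * D / am with hcsdef
  have hcspos : 0 < cs := div_pos (mul_pos hσ1n hDpos) ham0
  have hamcs : am * cs = σ1 * D := by
    rw [hcsdef, mul_comm]
    exact div_mul_cancel₀ _ (ne_of_gt ham0)
  set ρ : ℝ := 4*q^3 * (En * θn) with hρdef
  set η : ℝ := q^2 * θm with hηdef
  have hρ0 : 0 ≤ ρ := by positivity
  have hη0 : 0 ≤ η := by positivity
  have hρb : ρ ≤ 1/(4*q) := by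
    rw [le_div_iff₀ (by positivity : (0:ℝ) < 4*q), hρdef]
    have f1 : (16*q^4) * (En*θn) ≤ (16*q^4) * ee := mul_le_mul_of_nonneg_left hEθ hq4
    nlinarith only [f1, heesmall, hδ1]
  have hq21 : (0:ℝ) ≤ q^2 - 1 := by nlinarith only [hq]
  have hηb : η ≤ 1 := by
    rw [hηdef]
    have f1 : q^2 * θm ≤ q^2 * ee := mul_le_mul_of_nonneg_left hθm_ee (by positivity)
    have f2 : (0:ℝ) ≤ (q^2 - 1) * (16*q^2) * ee :=
      mul_nonneg (mul_nonneg hq21 (by positivity)) hee0.le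
    nlinarith only [f1, f2, heesmall, hδ1, hee0.le]
  have happ : ∀ k, |V m i0 k - cs * V n i0 k| ≤ cs * ρ + η := by
    intro k
    have e1 : U m im i0 * (σ1m' * V m i0 k) = am * V m i0 k := by rw [hamdef]; ring
    have hid : am * (V m i0 k - cs * V n i0 k)
        = (Mprod A m im k - σ1 * D * V n i0 k)
          - (Mprod A m im k - U m im i0 * (σ1m' * V m i0 k)) := by
      linear_combination (-(V n i0 k)) * hamcs - e1
    have hE := hEbound k
    have h2 : |Mprod A m im k - U m im i0 * (σ1m' * V m i0 k)| ≤ q * S m i1 i1 :=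
      svd_R' (hSVD m) hi0 hi1 im k
    have h3 : q * S m i1 i1 ≤ q * (θm * σ1m') := mul_le_mul_of_nonneg_left hσ2m hq0.le
    have habs : |am * (V m i0 k - cs * V n i0 k)| ≤ C * (q * (θn * σ1)) + q * (θm * σ1m') := by
      rw [hid]
      calc |(Mprod A m im k - σ1 * D * V n i0 k)
          - (Mprod A m im k - U m im i0 * (σ1m' * V m i0 k))|
          ≤ |Mprod A m im k - σ1 * D * V n i0 k|
            + |Mprod A m im k - U m im i0 * (σ1m' * V m i0 k)| := abs_sub _ _
      _ ≤ C * (q * (θn * σ1)) + q * (θm * σ1m') := by linarith only [hE, h2, h3]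
    have hb1 : C * (q * (θn * σ1)) ≤ am * (cs * ρ) := by
      have h1 : C * (q * (θn * σ1)) ≤ (4*q^2*En*D) * (q * (θn * σ1)) :=
        mul_le_mul_of_nonneg_right hCD (by positivity)
      have h2' : (4*q^2*En*D) * (q * (θn * σ1)) = (σ1 * D) * ρ := by rw [hρdef]; ring
      have h3' : (σ1 * D) * ρ = am * (cs * ρ) := by rw [← hamcs]; ring
      linarith only [h1, h2', h3']
    have hb2 : q * (θm * σ1m') ≤ am * η := by
      have h1 : (q * θm) * σ1m' ≤ (q * θm) * (q * am) :=
        mul_le_mul_of_nonneg_left hσqam (by positivity)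
      have h2' : (q * θm) * (q * am) = am * η := by rw [hηdef]; ring
      linarith only [h1, h2']
    have hfin : |am * (V m i0 k - cs * V n i0 k)| ≤ am * (cs * ρ + η) := by
      have e : am * (cs * ρ + η) = am * (cs * ρ) + am * η := by ring
      linarith only [habs, hb1, hb2, e]
    have habs2 : |am| * |V m i0 k - cs * V n i0 k| ≤ am * (cs * ρ + η) := by
      rw [← abs_mul]
      exact hfin
    rw [abs_of_pos ham0] at habs2
    exact le_of_mul_le_mul_left habs2 ham0
  have hx2 : ∑ k, (V m i0 k)^2 = 1 := row_sq_sum (hSVD m).2.2.2.1 i0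
  have hy2 : ∑ k, (V n i0 k)^2 = 1 := row_sq_sum (hSVD n).2.2.2.1 i0
  have hkbex : ∃ k, 1/q ≤ V n i0 k := by
    refine ⟨kb, ?_⟩
    rw [div_le_iff₀ hq0]
    linarith only [hvkn]
  have hest := vec_est hp hcspos hρ0 hρb hη0 hηb hx2 hy2 hkbex happ
  intro k
  have hfinal : 15*q^3*ρ + 5*q^2*η ≤ 65*q^6 * ee := by
    rw [hρdef, hηdef]
    have f1 : (60*q^6) * (En*θn) ≤ (60*q^6) * ee :=
      mul_le_mul_of_nonneg_left hEθ (by positivity)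
    have f2 : (5*q^4) * θm ≤ (5*q^4) * ee := mul_le_mul_of_nonneg_left hθm_ee (by positivity)
    have f3 : (0:ℝ) ≤ (q^2 - 1) * (5*q^4) * ee :=
      mul_nonneg (mul_nonneg hq21 (by positivity)) hee0.le
    nlinarith only [f1, f2, f3]
  calc |V m i0 k - V n i0 k| ≤ 15*q^3*ρ + 5*q^2*η := hest k
  _ ≤ 65*q^6 * ee := hfinal
lemma core {p : ℕ} (hp : 2 ≤ p)
    {A : ℕ → Matrix (Fin p) (Fin p) ℝ} (hallow : ∀ n, ColAllowable (A n))
    {τ : ℕ} (hprim : RowsPosOrZero (Mprod A τ))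
    {U S V : ℕ → Matrix (Fin p) (Fin p) ℝ}
    (hSVD : ∀ n, IsSVD (Mprod A n) (U n) (S n) (V n))
    {i0 i1 : Fin p} (hi0 : (i0:ℕ) = 0) (hi1 : (i1:ℕ) = 1)
    (hVch : ∀ n, (∃ U' S' V', IsSVD (Mprod A n) U' S' V' ∧ ∀ j, 0 ≤ V' i0 j) →
      ∀ j, 0 ≤ V n i0 j)
    {γ L1 : ℝ} (hγ : 0 < γ) {N : ℕ}
    (hσ1 : ∀ n, N ≤ n → Real.exp ((L1 - γ) * n) ≤ S n i0 i0)
    (hσ2 : ∀ n, N ≤ n → S n i1 i1 ≤ Real.exp ((L1 - 3*γ) * n))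
    (hsub : ∀ n, N ≤ n → ∀ i j k,
      Mprod A n j k = 0 ∨ Mprod A n i k ≤ Real.exp (γ/2 * n) * Mprod A n j k) :
    ∃ v1 : Fin p → ℝ,
      Tendsto (fun n : ℕ => (V n i0 : Fin p → ℝ)) atTop (nhds v1) ∧ ∀ i, 0 < v1 i := by
  have hq : (2:ℝ) ≤ (p:ℝ) := by exact_mod_cast hp
  set q : ℝ := (p:ℝ) with hqdef
  have hq0 : (0:ℝ) < q := by linarith only [hq]
  have hA0 : ∀ n i j, 0 ≤ A n i j := fun n => (hallow n).1
  -- the uniform column-comparability constant δ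
  obtain ⟨δ, hδ0, hδ1, hδbase⟩ : ∃ δ : ℝ, 0 < δ ∧ δ ≤ 1 ∧
      ∀ l k k', δ * Mprod A τ l k' ≤ Mprod A τ l k := by
    obtain ⟨i, hi⟩ := mprod_col hallow τ i0
    exact exists_delta0 (mprod_nonneg hA0 τ) hprim ⟨i, i0, hi⟩
  have hδall := delta_mono hA0 hδ0.le hδbase
  -- per-n positivity of σ1 and relative smallness of σ2
  have hσ1pos : ∀ n, N ≤ n → 0 < S n i0 i0 :=
    fun n hn => lt_of_lt_of_le (Real.exp_pos _) (hσ1 n hn)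
  have hσ2' : ∀ n, N ≤ n → S n i1 i1 ≤ Real.exp (-(2*γ) * n) * S n i0 i0 := by
    intro n hn
    calc S n i1 i1 ≤ Real.exp ((L1 - 3*γ) * n) := hσ2 n hn
    _ = Real.exp (-(2*γ) * n) * Real.exp ((L1 - γ) * n) := by
        rw [← Real.exp_add]
        congr 1
        ring
    _ ≤ Real.exp (-(2*γ) * n) * S n i0 i0 :=
        mul_le_mul_of_nonneg_left (hσ1 n hn) (Real.exp_pos _).le
  -- decay of exp(-(γ/2) n)
  have hdecay : Tendsto (fun n : ℕ => Real.exp (-(γ/2) * n)) atTop (nhds 0) := by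
    have h1 : Tendsto (fun n : ℕ => Real.exp (-(γ/2)) ^ n) atTop (nhds 0) := by
      apply tendsto_pow_atTop_nhds_zero_of_lt_one (Real.exp_pos _).le
      rw [Real.exp_lt_one_iff]
      linarith only [hγ]
    refine h1.congr fun n => ?_
    rw [← Real.exp_nat_mul]
    congr 1
    ring
  -- pick N₁
  have hev : ∀ᶠ n : ℕ in atTop, Real.exp (-(γ/2) * n) * (16*q^4) ≤ δ ∧ N ≤ n ∧ τ ≤ n := by
    have h1 : ∀ᶠ n : ℕ in atTop, Real.exp (-(γ/2) * n) < δ / (16*q^4) := by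
      refine hdecay.eventually (eventually_lt_nhds ?_)
      positivity
    filter_upwards [h1, eventually_ge_atTop N, eventually_ge_atTop τ] with n h1 h2 h3
    refine ⟨?_, h2, h3⟩
    rw [lt_div_iff₀ (by positivity : (0:ℝ) < 16*q^4)] at h1
    linarith only [h1]
  obtain ⟨N₁, hN₁⟩ := eventually_atTop.1 hev
  have hsmall : ∀ n, N₁ ≤ n → Real.exp (-(γ/2) * n) * (16*q^4) ≤ δ := fun n hn => (hN₁ n hn).1
  have hNN₁ : ∀ n, N₁ ≤ n → N ≤ n := fun n hn => (hN₁ n hn).2.1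
  have hτN₁ : ∀ n, N₁ ≤ n → τ ≤ n := fun n hn => (hN₁ n hn).2.2
  -- the Cauchy estimate
  have hest : ∀ n m, N₁ ≤ n → n ≤ m → ∀ k,
      |V m i0 k - V n i0 k| ≤ 65*q^6 * Real.exp (-(γ/2) * n) := by
    intro n m hn hnm
    exact est hp hallow hprim hSVD hi0 hi1 hVch hδ0 hδ1 hδall hγ n m (hτN₁ n hn) hnm
      (hσ1pos n (hNN₁ n hn)) (hσ1pos m (le_trans (hNN₁ n hn) hnm))
      (hσ2' n (hNN₁ n hn)) (hσ2' m (le_trans (hNN₁ n hn) hnm))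
      (hsmall n hn) (hsub n (hNN₁ n hn))
  -- entrywise positivity bound for n ≥ N₁
  have hlower : ∀ n, N₁ ≤ n → ∀ k, δ ≤ 4*q^2 * V n i0 k := by
    intro n hn
    have hθe : Real.exp (-(2*γ) * n) ≤ Real.exp (-(γ/2) * n) := by
      apply Real.exp_le_exp.2
      have : (0:ℝ) ≤ γ * n := mul_nonneg hγ.le (Nat.cast_nonneg n)
      nlinarith only [this]
    have hθs : 16*q^4 * Real.exp (-(2*γ) * n) ≤ δ := by
      have h1 : (16*q^4) * Real.exp (-(2*γ) * n) ≤ (16*q^4) * Real.exp (-(γ/2) * n) :=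
        mul_le_mul_of_nonneg_left hθe (by positivity)
      linarith only [h1, hsmall n hn]
    obtain ⟨_, _, _, _, _, _, he⟩ :=
      key hp hallow hprim hSVD hi0 hi1 hVch hδ0 hδ1 hδall n (hτN₁ n hn)
        (hσ1pos n (hNN₁ n hn)) (Real.exp_pos _).le hθs (hσ2' n (hNN₁ n hn))
    exact he
  -- coordinatewise Cauchy and limits
  have hconv : ∀ k, ∃ l : ℝ, Tendsto (fun n : ℕ => V n i0 k) atTop (nhds l) := by
    intro k
    have hcauchy : CauchySeq (fun n : ℕ => V n i0 k) := by
      rw [Metric.cauchySeq_iff']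
      intro ε hε
      have h1 : ∀ᶠ n : ℕ in atTop, 65*q^6 * Real.exp (-(γ/2) * n) < ε ∧ N₁ ≤ n := by
        have h2 : Tendsto (fun n : ℕ => 65*q^6 * Real.exp (-(γ/2) * n)) atTop (nhds 0) := by
          have := hdecay.const_mul (65*q^6)
          simpa using this
        filter_upwards [h2.eventually (eventually_lt_nhds hε), eventually_ge_atTop N₁]
          with n ha hb
        exact ⟨ha, hb⟩
      obtain ⟨N₂, hN₂⟩ := eventually_atTop.1 h1
      refine ⟨N₂, fun n hn => ?_⟩
      rw [Real.dist_eq]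
      calc |V n i0 k - V N₂ i0 k| ≤ 65*q^6 * Real.exp (-(γ/2) * N₂) :=
        hest N₂ n (hN₂ N₂ le_rfl).2 hn k
      _ < ε := (hN₂ N₂ le_rfl).1
    exact cauchySeq_tendsto_of_complete hcauchy
  choose v1 hv1 using hconv
  refine ⟨v1, tendsto_pi_nhds.2 hv1, fun k => ?_⟩
  have hlb : δ / (4*q^2) ≤ v1 k := by
    apply ge_of_tendsto (hv1 k)
    filter_upwards [eventually_ge_atTop N₁] with n hn
    rw [div_le_iff₀ (by positivity : (0:ℝ) < 4*q^2)]
    have := hlower n hn k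
    linarith only [this]
  have : (0:ℝ) < δ / (4*q^2) := by positivity
  linarith only [hlb, this]
lemma elog_lower {x c : ℝ} {n : ℕ} (hn : 1 ≤ n)
    (h : ((c : ℝ) : EReal) < (((n:ℝ)⁻¹ : ℝ) : EReal) * elog x) : Real.exp (c * n) ≤ x := by
  have hn0 : (0:ℝ) < (n:ℝ) := by exact_mod_cast hn
  by_cases hx : x ≤ 0
  · exfalso
    unfold elog at h
    rw [if_pos hx, EReal.coe_mul_bot_of_pos (inv_pos.2 hn0)] at h
    simp at h
  · push_neg at hx
    unfold elog at h
    rw [if_neg (not_le.2 hx), ← EReal.coe_mul] at h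
    have h' : c < (n:ℝ)⁻¹ * Real.log x := EReal.coe_lt_coe_iff.1 h
    rw [← div_eq_inv_mul] at h'
    have h2 : c * n < Real.log x := (lt_div_iff₀ hn0).1 h'
    calc Real.exp (c * n) ≤ Real.exp (Real.log x) := Real.exp_le_exp.2 h2.le
    _ = x := Real.exp_log hx

lemma elog_upper {x c : ℝ} {n : ℕ} (hn : 1 ≤ n) (hx0 : 0 ≤ x)
    (h : (((n:ℝ)⁻¹ : ℝ) : EReal) * elog x < ((c : ℝ) : EReal)) : x ≤ Real.exp (c * n) := by
  have hn0 : (0:ℝ) < (n:ℝ) := by exact_mod_cast hn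
  by_cases hx : x ≤ 0
  · calc x ≤ 0 := hx
    _ ≤ Real.exp (c * n) := (Real.exp_pos _).le
  · push_neg at hx
    unfold elog at h
    rw [if_neg (not_le.2 hx), ← EReal.coe_mul] at h
    have h' : (n:ℝ)⁻¹ * Real.log x < c := EReal.coe_lt_coe_iff.1 h
    rw [← div_eq_inv_mul] at h'
    have h2 : Real.log x < c * n := (div_lt_iff₀ hn0).1 h'
    calc x = Real.exp (Real.log x) := (Real.exp_log hx).symm
    _ ≤ Real.exp (c * n) := Real.exp_le_exp.2 h2.le

end S6aux

/-- For a strictly stationary ergodic, weakly sequentially primitive process of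
nonnegative column-allowable matrices with `E log⁺‖A₁‖ < ∞`, positive spectral gap and the weak
subexponentiality condition, given a measurable choice of SVDs `Mₙ = Uₙ Σₙ Vₙ` in which the
first row `vₙ¹` of `Vₙ` is chosen with nonnegative entries whenever possible: almost surely
`v¹ = lim vₙ¹` exists and has all coordinates strictly positive. -/
theorem statement6 {p : ℕ} (hp : 2 ≤ p) {Ω : Type*} [MeasurableSpace Ω]
    (μ : Measure Ω) [IsProbabilityMeasure μ]
    (T : Ω → Ω) (hT : Ergodic T μ)
    (AP : Ω → ℕ → Matrix (Fin p) (Fin p) ℝ)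
    (hAmeas : ∀ n i j, Measurable (fun ω => AP ω n i j))
    (hstat : ∀ ω n, AP ω (n + 1) = AP (T ω) n)
    (hallow : ∀ᵐ ω ∂μ, ∀ n, ColAllowable (AP ω n))
    (hint : ∫⁻ ω, ENNReal.ofReal (max (Real.log (matNorm (AP ω 0))) 0) ∂μ < ⊤)
    (τ : Ω → ℕ) (hτmeas : Measurable τ)
    (hprim : ∀ᵐ ω ∂μ, RowsPosOrZero (Mprod (AP ω) (τ ω)))
    (U S V : Ω → ℕ → Matrix (Fin p) (Fin p) ℝ)
    (hUmeas : ∀ n i j, Measurable (fun ω => U ω n i j))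
    (hSmeas : ∀ n i j, Measurable (fun ω => S ω n i j))
    (hVmeas : ∀ n i j, Measurable (fun ω => V ω n i j))
    (hSVD : ∀ᵐ ω ∂μ, ∀ n, IsSVD (Mprod (AP ω) n) (U ω n) (S ω n) (V ω n))
    (hVchoice : ∀ᵐ ω ∂μ, ∀ n,
      (∃ U' S' V', IsSVD (Mprod (AP ω) n) U' S' V' ∧ ∀ j, 0 ≤ V' ⟨0, by omega⟩ j) →
      ∀ j, 0 ≤ V ω n ⟨0, by omega⟩ j)
    (lam1 lam2 : EReal) (hlam1top : lam1 ≠ ⊤) (hlam2top : lam2 ≠ ⊤)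
    (hlam1 : ∀ᵐ ω ∂μ, Tendsto
      (fun n : ℕ => (((n : ℝ)⁻¹ : ℝ) : EReal) * elog (S ω n ⟨0, by omega⟩ ⟨0, by omega⟩))
      atTop (nhds lam1))
    (hlam2 : ∀ᵐ ω ∂μ, Tendsto
      (fun n : ℕ => (((n : ℝ)⁻¹ : ℝ) : EReal) * elog (S ω n ⟨1, by omega⟩ ⟨1, by omega⟩))
      atTop (nhds lam2))
    (hgap : (0 : EReal) < lam1 - lam2)
    (hsub : ∀ i j k : Fin p, ∀ ε : ℝ, 0 < ε → ∀ᵐ ω ∂μ, ∀ᶠ n in atTop,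
      Mprod (AP ω) n j k = 0 ∨
        Mprod (AP ω) n i k ≤ Real.exp (ε * n) * Mprod (AP ω) n j k) :
    ∀ᵐ ω ∂μ, ∃ v1 : Fin p → ℝ,
      Tendsto (fun n : ℕ => (V ω n ⟨0, by omega⟩ : Fin p → ℝ)) atTop (nhds v1) ∧
      ∀ i, 0 < v1 i := by
  classical
  have hi0 : ((⟨0, by omega⟩ : Fin p) : ℕ) = 0 := rfl
  have hi1 : ((⟨1, by omega⟩ : Fin p) : ℕ) = 1 := rfl
  -- lam1 is a real number
  have hlam1bot : lam1 ≠ ⊥ := by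
    intro h
    rw [h, EReal.bot_sub] at hgap
    exact absurd hgap (by simp)
  set L1 : ℝ := lam1.toReal with hL1def
  have hL1 : (L1 : EReal) = lam1 := EReal.coe_toReal hlam1top hlam1bot
  -- choose γ
  obtain ⟨γ, hγ0, hγlt⟩ : ∃ γ : ℝ, 0 < γ ∧ lam2 < ((L1 - 3*γ : ℝ) : EReal) := by
    by_cases hb : lam2 = ⊥
    · exact ⟨1, one_pos, by rw [hb]; exact EReal.bot_lt_coe _⟩
    · set L2 : ℝ := lam2.toReal with hL2def
      have hL2 : (L2 : EReal) = lam2 := EReal.coe_toReal hlam2top hb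
      have hgap' : (0:ℝ) < L1 - L2 := by
        have he : lam1 - lam2 = ((L1 - L2 : ℝ) : EReal) := by
          rw [EReal.coe_sub, hL1, hL2]
        rw [he] at hgap
        exact_mod_cast hgap
      refine ⟨(L1 - L2)/4, by linarith, ?_⟩
      rw [← hL2]
      exact_mod_cast (by linarith : L2 < L1 - 3*((L1-L2)/4))
  have hγgt : ((L1 - γ : ℝ) : EReal) < lam1 := by
    rw [← hL1]
    exact_mod_cast (by linarith : L1 - γ < L1)
  -- a.e. combination of the subexponentiality for ε = γ/2
  have hsuball : ∀ᵐ ω ∂μ, ∀ i j k : Fin p, ∀ᶠ n in atTop,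
      Mprod (AP ω) n j k = 0 ∨
        Mprod (AP ω) n i k ≤ Real.exp (γ/2 * n) * Mprod (AP ω) n j k :=
    (ae_all_iff).2 fun i => (ae_all_iff).2 fun j => (ae_all_iff).2 fun k =>
      hsub i j k (γ/2) (by linarith)
  filter_upwards [hallow, hprim, hSVD, hVchoice, hlam1, hlam2, hsuball] with
    ω hallowω hprimω hSVDω hVchω hl1ω hl2ω hsubω
  -- eventual bounds
  have h1ev : ∀ᶠ n : ℕ in atTop,
      ((L1 - γ : ℝ) : EReal) < (((n:ℝ)⁻¹ : ℝ) : EReal) * elog (S ω n ⟨0, by omega⟩ ⟨0, by omega⟩) :=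
    hl1ω.eventually (eventually_gt_nhds hγgt)
  have h2ev : ∀ᶠ n : ℕ in atTop,
      (((n:ℝ)⁻¹ : ℝ) : EReal) * elog (S ω n ⟨1, by omega⟩ ⟨1, by omega⟩)
        < ((L1 - 3*γ : ℝ) : EReal) :=
    hl2ω.eventually (eventually_lt_nhds hγlt)
  have h3ev : ∀ᶠ n : ℕ in atTop, ∀ i j k : Fin p,
      Mprod (AP ω) n j k = 0 ∨
        Mprod (AP ω) n i k ≤ Real.exp (γ/2 * n) * Mprod (AP ω) n j k :=
    eventually_all.2 fun i => eventually_all.2 fun j => eventually_all.2 fun k => hsubω i j k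
  obtain ⟨N, hN⟩ := eventually_atTop.1
    (((h1ev.and h2ev).and h3ev).and (eventually_ge_atTop 1))
  refine S6aux.core hp hallowω hprimω hSVDω hi0 hi1 hVchω hγ0 (N := N)
    (L1 := L1) ?_ ?_ ?_
  · intro n hn
    exact S6aux.elog_lower (hN n hn).2 ((hN n hn).1.1.1)
  · intro n hn
    have hx0 : 0 ≤ S ω n ⟨1, by omega⟩ ⟨1, by omega⟩ := (hSVDω n).2.2.2.2.2.1 _
    exact S6aux.elog_upper (hN n hn).2 hx0 ((hN n hn).1.1.2)
  · intro n hn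
    exact (hN n hn).1.2
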